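/- Let A be a commutative algebra, I an abstract continuity ideal in A, and {P_α : α ∈ S} a family of prime ideals each of the form (I : a_α) for some a_α ∈ A. Then the intersection ⋂_{α ∈ S} P_α is also an abstract continuity ideal in A. -/

import Mathlib

/-! `((⋂ α, (I : a_α)) : c) = ⋂ α, ((I : c) : a_α)` depends on `c` only through `(I : c)`, so the
chain of quotients of the intersection stabilizes wherever the chain of quotients of `I` does. -/

/-- The quotient ideal `(J : a) = {x | a * x ∈ J}`. -/
def quotIdeal {A : Type*} [CommRing A] (J : Ideal A) (a : A) : Ideal A where
  carrier := {x | a * x ∈ J}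
  zero_mem' := by simp
  add_mem' := by
    intro x y hx hy
    simpa [mul_add] using J.add_mem hx hy
  smul_mem' := by
    intro c x hx
    simp only [smul_eq_mul, Set.mem_setOf_eq, mul_left_comm a c x] at *
    exact J.mul_mem_left c hx

/-- An ideal `I` is an abstract continuity ideal if for every sequence
`(a n)` the increasing chain of quotient ideals eventually stabilizes. -/
def AbstractContinuityIdeal {A : Type*} [CommRing A] (I : Ideal A) : Prop :=
  ∀ a : ℕ → A, ∃ n₀ : ℕ, ∀ n ≥ n₀,
    quotIdeal I (∏ i ∈ Finset.range n, a i) =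
      quotIdeal I (∏ i ∈ Finset.range (n + 1), a i)

section QuotIdeal

variable {A : Type*} [CommRing A]

lemma mem_quotIdeal (J : Ideal A) (c x : A) : x ∈ quotIdeal J c ↔ c * x ∈ J := Iff.rfl

lemma quotIdeal_iInf {ι : Sort*} (J : ι → Ideal A) (c : A) :
    quotIdeal (⨅ i, J i) c = ⨅ i, quotIdeal (J i) c := by
  ext x
  simp only [mem_quotIdeal, Ideal.mem_iInf]

lemma quotIdeal_comm (J : Ideal A) (a c : A) :
    quotIdeal (quotIdeal J a) c = quotIdeal (quotIdeal J c) a := by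
  ext x
  simp only [mem_quotIdeal, mul_left_comm]

end QuotIdeal

theorem iInf_of_prime_quotIdeals_is_ACI_general {A : Type*} [CommRing A]
    (I : Ideal A) (hI : AbstractContinuityIdeal I)
    {S : Type*} (a : S → A) :
    AbstractContinuityIdeal (⨅ α : S, quotIdeal I (a α)) := by
  intro b
  obtain ⟨n₀, hstable⟩ := hI b
  refine ⟨n₀, fun n hn => ?_⟩
  simp only [quotIdeal_iInf, quotIdeal_comm I (a _)]
  rw [hstable n hn]

/-- If `I` is an abstract continuity ideal and `(P α)` is a family of prime
ideals, each of the form `(I : a α)`, then `⋂ α, P α` is also an abstract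
continuity ideal. -/
theorem iInf_of_prime_quotIdeals_is_ACI {A : Type*} [CommRing A]
    (I : Ideal A) (hI : AbstractContinuityIdeal I)
    {S : Type*} (a : S → A)
    (hprime : ∀ α : S, (quotIdeal I (a α)).IsPrime) :
    AbstractContinuityIdeal (⨅ α : S, quotIdeal I (a α)) :=
  iInf_of_prime_quotIdeals_is_ACI_general I hI a
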